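/- Let B = k[T_1, T_2, T_3] be Z^2-graded with deg T_1 = (2,1), deg T_2 = (3,1), deg T_3 = (6,1). For (μ,t) ∈ Z^2 with 3t ≤ μ ≤ 6t: if 3 divides μ - 3t then dim_k B_{(μ,t)} = ⌊(μ-2t)/4⌋ - (μ-3t)/3 + 1, and if 3 does not divide μ - 3t then dim_k B_{(μ,t)} = ⌊(μ-2t)/4⌋ - ⌊(μ-3t)/3⌋. -/
import Mathlib

/-- same ring, chamber `3t ≤ μ ≤ 6t`. -/
theorem stmt_7 (μ t : ℤ) (h1 : 3 * t ≤ μ) (h2 : μ ≤ 6 * t) :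
    ((3 : ℤ) ∣ (μ - 3 * t) →
      (Nat.card {x : ℕ × ℕ × ℕ //
          2 * (x.1 : ℤ) + 3 * (x.2.1 : ℤ) + 6 * (x.2.2 : ℤ) = μ ∧
          (x.1 : ℤ) + (x.2.1 : ℤ) + (x.2.2 : ℤ) = t} : ℤ)
        = (μ - 2 * t) / 4 - (μ - 3 * t) / 3 + 1) ∧
    (¬ (3 : ℤ) ∣ (μ - 3 * t) →
      (Nat.card {x : ℕ × ℕ × ℕ //
          2 * (x.1 : ℤ) + 3 * (x.2.1 : ℤ) + 6 * (x.2.2 : ℤ) = μ ∧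
          (x.1 : ℤ) + (x.2.1 : ℤ) + (x.2.2 : ℤ) = t} : ℤ)
        = (μ - 2 * t) / 4 - (μ - 3 * t) / 3) := by
  obtain ⟨T, rfl⟩ : ∃ T : ℕ, t = (T : ℤ) := ⟨t.toNat, by omega⟩
  obtain ⟨M, rfl⟩ : ∃ M : ℕ, μ = (M : ℤ) + 3 * (T : ℤ) := ⟨(μ - 3 * T).toNat, by omega⟩
  have hMT : M ≤ 3 * T := by omega
  have e : {x : ℕ × ℕ × ℕ //
      2 * (x.1 : ℤ) + 3 * (x.2.1 : ℤ) + 6 * (x.2.2 : ℤ) = (M : ℤ) + 3 * (T : ℤ) ∧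
      (x.1 : ℤ) + (x.2.1 : ℤ) + (x.2.2 : ℤ) = (T : ℤ)} ≃
      {c : ℕ // c ∈ Finset.Icc ((M + 2) / 3) ((M + T) / 4)} :=
    { toFun := fun x => ⟨x.1.2.2, by
        obtain ⟨⟨a, b, c⟩, hx1, hx2⟩ := x
        simp only [Finset.mem_Icc]
        simp only [Prod.fst, Prod.snd] at hx1 hx2 ⊢
        omega⟩
      invFun := fun c => ⟨(3 * c.1 - M, M + T - 4 * c.1, c.1), by
        have hc := c.2
        simp only [Finset.mem_Icc] at hc
        constructor <;> simp only [Prod.fst, Prod.snd] <;> omega⟩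
      left_inv := fun x => by
        obtain ⟨⟨a, b, c⟩, hx1, hx2⟩ := x
        simp only [Prod.fst, Prod.snd] at hx1 hx2
        apply Subtype.ext
        simp only [Prod.fst, Prod.snd, Prod.mk.injEq]
        exact ⟨by omega, by omega, trivial⟩
      right_inv := fun c => rfl }
  have key : Nat.card {x : ℕ × ℕ × ℕ //
      2 * (x.1 : ℤ) + 3 * (x.2.1 : ℤ) + 6 * (x.2.2 : ℤ) = (M : ℤ) + 3 * (T : ℤ) ∧
      (x.1 : ℤ) + (x.2.1 : ℤ) + (x.2.2 : ℤ) = (T : ℤ)}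
      = (M + T) / 4 + 1 - (M + 2) / 3 := by
    rw [Nat.card_congr e, Nat.card_eq_finsetCard, Nat.card_Icc]
  constructor <;> intro hd <;> rw [key] <;> omega
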